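/- Exact summation of approximate gaps: let 0 = z_0 < z_1 < ... < z_N = Ω enumerate all non-negative finite floating-point numbers in increasing order. For any j and any choice of floating-point numbers x_i with x_i strictly between (1/2)·(z_i − z_{i−1}) and (3/2)·(z_i − z_{i−1}) for each i = 1,...,j, the left-associated floating-point sum x_1 ⊕ x_2 ⊕ ... ⊕ x_j equals z_j exactly. -/
import Mathlib

namespace FPFmt

/-- Smallest exponent of the format with `E` exponent bits. -/
def emin (E : ℕ) : ℤ := 2 - 2 ^ (E - 1)

/-- Largest exponent of the format with `E` exponent bits. -/
def emax (E : ℕ) : ℤ := 2 ^ (E - 1) - 1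

/-- Finite floating-point numbers with `E`-bit exponent and `(M+1)`-bit
    significand (including subnormals). -/
def Ffin (E M : ℕ) : Set ℝ :=
  {x | ∃ n e : ℤ, emin E ≤ e ∧ e ≤ emax E ∧ |n| < 2 ^ (M + 1) ∧
    x = (n : ℝ) * 2 ^ (e - (M : ℤ))}

/-- Smallest positive float. -/
noncomputable def omega (E M : ℕ) : ℝ := 2 ^ (emin E - (M : ℤ))

/-- Largest finite float. -/
noncomputable def Omax (E M : ℕ) : ℝ := (2 - 2 ^ (-(M : ℤ))) * 2 ^ (emax E)

/-- Exponent of a finite float (with subnormal clamping). -/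
noncomputable def expo (E : ℕ) (x : ℝ) : ℤ := max (Int.log 2 |x|) (emin E)

/-- Significand of a finite float. -/
noncomputable def mant (E : ℕ) (x : ℝ) : ℝ := |x| / 2 ^ (expo E x)

/-- `y` has an even significand in canonical form. -/
def EvenSig (E M : ℕ) (y : ℝ) : Prop :=
  ∃ n e : ℤ, Even n ∧ |n| < 2 ^ (M + 1) ∧ emin E ≤ e ∧ e ≤ emax E ∧
    ((2 : ℤ) ^ M ≤ |n| ∨ e = emin E) ∧ y = (n : ℝ) * 2 ^ (e - (M : ℤ))

/-- `y` is the result of rounding `x` to nearest (ties to even) onto the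
    finite floats of the format. -/
def RoundsTo (E M : ℕ) (x y : ℝ) : Prop :=
  y ∈ Ffin E M ∧ (∀ z ∈ Ffin E M, |y - x| ≤ |z - x|) ∧
    ((∃ z ∈ Ffin E M, z ≠ y ∧ |z - x| = |y - x|) → EvenSig E M y)

open Classical in
noncomputable def rnd (E M : ℕ) (x : ℝ) : ℝ :=
  if h : ∃ y, RoundsTo E M x y then h.choose else 0

/-- Floating-point addition (round to nearest, ties to even). -/
noncomputable def fadd (E M : ℕ) (x y : ℝ) : ℝ := rnd E M (x + y)

/-- Floating-point multiplication (round to nearest, ties to even). -/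
noncomputable def fmul (E M : ℕ) (x y : ℝ) : ℝ := rnd E M (x * y)

/-- Successor float of `x`. -/
noncomputable def fsucc (E M : ℕ) (x : ℝ) : ℝ := sInf {y | y ∈ Ffin E M ∧ x < y}


/-- Left-associated floating-point sum `x 1 ⊕ x 2 ⊕ ⋯ ⊕ x j`. -/
noncomputable def fsum (E M : ℕ) (x : ℕ → ℝ) : ℕ → ℝ
  | 0 => 0
  | 1 => x 1
  | n + 2 => fadd E M (fsum E M x (n + 1)) (x (n + 2))

lemma emin_lt_emax {E : ℕ} (hE : 5 ≤ E) : emin E < emax E := by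
  unfold emin emax
  have h : (16:ℤ) ≤ 2 ^ (E-1) := by
    calc (16:ℤ) = 2^4 := by norm_num
    _ ≤ 2^(E-1) := pow_le_pow_right₀ (by norm_num) (by omega)
  omega

lemma Omax_eq (E M : ℕ) : Omax E M = ((2:ℝ)^(M+1) - 1) * 2 ^ (emax E - (M:ℤ)) := by
  unfold Omax
  have e1 : (2:ℝ)^(M+1) * 2^(emax E - (M:ℤ)) = 2 * 2^(emax E) := by
    rw [← zpow_natCast (2:ℝ) (M+1), ← zpow_add₀ two_ne_zero,
      show ((M+1:ℕ):ℤ) + (emax E - (M:ℤ)) = 1 + emax E by push_cast; ring,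
      zpow_add₀ two_ne_zero, zpow_one]
  have e2 : (2:ℝ)^(-(M:ℤ)) * 2^(emax E) = 2^(emax E - (M:ℤ)) := by
    rw [← zpow_add₀ two_ne_zero]; ring_nf
  rw [sub_mul, sub_mul, one_mul, e1, e2]

lemma mem_le_Omax {E M : ℕ} {w : ℝ} (hw : w ∈ Ffin E M) : w ≤ Omax E M := by
  obtain ⟨n, e, he1, he2, hn, rfl⟩ := hw
  rw [Omax_eq]
  have hn' : (n:ℝ) ≤ (2:ℝ)^(M+1) - 1 := by
    have : n ≤ 2^(M+1) - 1 := by have := (le_abs_self n).trans_lt hn; omega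
    exact_mod_cast this
  have h1 : (0:ℝ) < 2 ^ (e - (M:ℤ)) := by positivity
  have h2 : (2:ℝ) ^ (e - (M:ℤ)) ≤ 2 ^ (emax E - (M:ℤ)) :=
    zpow_le_zpow_right₀ (by norm_num) (by omega)
  have h3 : (0:ℝ) ≤ (2:ℝ)^(M+1) - 1 := by
    have : (1:ℝ) ≤ 2^(M+1) := one_le_pow₀ (by norm_num)
    linarith
  calc (n:ℝ) * 2 ^ (e - (M:ℤ)) ≤ ((2:ℝ)^(M+1) - 1) * 2 ^ (e - (M:ℤ)) := by
        exact mul_le_mul_of_nonneg_right hn' h1.le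
    _ ≤ ((2:ℝ)^(M+1) - 1) * 2 ^ (emax E - (M:ℤ)) := mul_le_mul_of_nonneg_left h2 h3

lemma mem_int_mul {E M : ℕ} {w : ℝ} (hw : w ∈ Ffin E M) :
    ∃ k : ℤ, w = (k:ℝ) * 2 ^ (emin E - (M:ℤ)) := by
  obtain ⟨n, e, he1, he2, hn, rfl⟩ := hw
  refine ⟨n * 2 ^ (e - emin E).toNat, ?_⟩
  push_cast
  rw [← zpow_natCast (2:ℝ) (e - emin E).toNat, Int.toNat_of_nonneg (by omega),
    mul_assoc, ← zpow_add₀ (two_ne_zero)]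
  ring_nf

lemma rep_lt {M : ℕ} {m f : ℤ} (hm : |m| < 2^(M+1)) :
    (m:ℝ) * 2^(f - (M:ℤ)) < 2^(f+1) := by
  have h1 : (m:ℝ) < (2:ℝ)^(M+1) := by
    have : m < 2^(M+1) := (le_abs_self m).trans_lt hm
    exact_mod_cast this
  have h2 : (0:ℝ) < 2^(f - (M:ℤ)) := by positivity
  calc (m:ℝ)*2^(f - (M:ℤ)) < (2:ℝ)^(M+1)*2^(f - (M:ℤ)) := mul_lt_mul_of_pos_right h1 h2
    _ = 2^(f+1) := by
        rw [← zpow_natCast (2:ℝ) (M+1), ← zpow_add₀ two_ne_zero]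
        congr 1; push_cast; ring

lemma log_le_of_rep {M : ℕ} {w : ℝ} (hw0 : 0 < w) {m f : ℤ}
    (hm : |m| < 2^(M+1)) (hrep : w = (m:ℝ)*2^(f - (M:ℤ))) : Int.log 2 w ≤ f := by
  have h := rep_lt (f := f) hm
  rw [← hrep] at h
  have h3 := (Int.lt_zpow_iff_log_lt (b:=2) (by norm_num) hw0).mp (by exact_mod_cast h)
  omega

lemma canonical {E M : ℕ} {a : ℝ} (ha : a ∈ Ffin E M) (ha0 : 0 < a) :
    ∃ n : ℤ, 0 < n ∧ n < 2^(M+1) ∧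
      a = (n:ℝ) * 2 ^ (max (Int.log 2 a) (emin E) - (M:ℤ)) := by
  obtain ⟨m, f, hf1, hf2, hm, hrep⟩ := ha
  set e := max (Int.log 2 a) (emin E) with he
  have hloga : Int.log 2 a ≤ f := log_le_of_rep ha0 hm hrep
  have hef : e ≤ f := max_le hloga hf1
  have hcast : a = ((m * 2 ^ (f - e).toNat : ℤ) : ℝ) * 2^(e - (M:ℤ)) := by
    rw [hrep]; push_cast
    rw [← zpow_natCast (2:ℝ) (f-e).toNat, Int.toNat_of_nonneg (by omega),
      mul_assoc, ← zpow_add₀ two_ne_zero]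
    ring_nf
  set n : ℤ := m * 2 ^ (f - e).toNat with hn
  have hz : (0:ℝ) < 2^(e - (M:ℤ)) := by positivity
  have hnpos : 0 < n := by
    by_contra hc
    push_neg at hc
    have : (n:ℝ) ≤ 0 := by exact_mod_cast hc
    nlinarith [hcast ▸ ha0]
  have haup : a < (2:ℝ)^(e+1) := by
    have h1 : a < (2:ℝ)^(Int.log 2 a + 1) := by
      have := Int.lt_zpow_succ_log_self (b:=2) (by norm_num) a
      exact_mod_cast this
    exact h1.trans_le (zpow_le_zpow_right₀ one_le_two (by omega))
  have hnb : n < 2^(M+1) := by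
    have h1 : (n:ℝ) * 2^(e - (M:ℤ)) < (2:ℝ)^(M+1) * 2^(e - (M:ℤ)) := by
      rw [← hcast]
      calc a < 2^(e+1) := haup
        _ = (2:ℝ)^(M+1) * 2^(e - (M:ℤ)) := by
            rw [← zpow_natCast (2:ℝ) (M+1), ← zpow_add₀ two_ne_zero]
            congr 1; push_cast; ring
    have h2 : (n:ℝ) < (2:ℝ)^(M+1) := lt_of_mul_lt_mul_right h1 hz.le
    exact_mod_cast h2
  exact ⟨n, hnpos, hnb, hcast⟩

lemma zpow_merge (a b : ℤ) : (2:ℝ)^a * 2^b = 2^(a+b) := (zpow_add₀ two_ne_zero a b).symm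

lemma gap {E M : ℕ} (hE : 5 ≤ E) {a b : ℝ} (ha : a ∈ Ffin E M) (hb : b ∈ Ffin E M)
    (ha0 : 0 < a) (hab : a < b)
    (hno : ∀ w ∈ Ffin E M, ¬(a < w ∧ w < b)) :
    b = a + 2 ^ (max (Int.log 2 a) (emin E) - (M:ℤ)) := by
  set e := max (Int.log 2 a) (emin E) with he
  obtain ⟨n, hn0, hn2, hrep⟩ := canonical ha ha0
  rw [← he] at hrep
  have hz : (0:ℝ) < 2^(e - (M:ℤ)) := by positivity
  have hemax : e ≤ emax E := by
    have h1 : a ≤ Omax E M := mem_le_Omax ha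
    have h2 : a < (2:ℝ)^(emax E + 1) := by
      have h3 : (0:ℝ) < 2^(-(M:ℤ)) := by positivity
      have h4 : (0:ℝ) < 2^(emax E) := by positivity
      have h5 : Omax E M < 2 * 2^(emax E) := by unfold Omax; nlinarith
      calc a ≤ Omax E M := h1
        _ < 2 * 2^(emax E) := h5
        _ = 2^(emax E + 1) := by rw [zpow_add₀ two_ne_zero, zpow_one]; ring
    have h5 := (Int.lt_zpow_iff_log_lt (b:=2) (by norm_num) ha0).mp (by exact_mod_cast h2)
    have h6 := emin_lt_emax (E := E) hE
    omega
  have hbmem : a + 2^(e - (M:ℤ)) ∈ Ffin E M := by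
    by_cases hcase : n + 1 < 2^(M+1)
    · refine ⟨n+1, e, le_max_right _ _, hemax, ?_, ?_⟩
      · rw [abs_of_pos (by omega)]; exact hcase
      · rw [hrep]; push_cast; ring
    · have hn1 : n = 2^(M+1) - 1 := by omega
      have helt : e < emax E := by
        rcases lt_or_eq_of_le hemax with h | h
        · exact h
        · exfalso
          have haO : a = Omax E M := by
            rw [hrep, hn1, h, Omax_eq]; push_cast; ring
          have := mem_le_Omax hb
          rw [← haO] at this
          linarith
      refine ⟨2^M, e+1, ?_, by omega, ?_, ?_⟩
      · have := le_max_right (Int.log 2 a) (emin E); omega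
      · rw [abs_of_nonneg (by positivity)]
        exact pow_lt_pow_right₀ (by norm_num) (by omega)
      · rw [hrep, hn1]
        push_cast
        have key : (2:ℝ)^(M+1) * 2^(e - (M:ℤ)) = 2^M * 2^(e+1 - (M:ℤ)) := by
          rw [← zpow_natCast (2:ℝ) (M+1), ← zpow_natCast (2:ℝ) M, zpow_merge, zpow_merge]
          congr 1; push_cast; ring
        rw [sub_mul, key]; ring
  have hub : b ≤ a + 2^(e - (M:ℤ)) := by
    by_contra h
    push_neg at h
    exact hno _ hbmem ⟨by linarith, h⟩
  have hlb : a + 2^(e - (M:ℤ)) ≤ b := by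
    obtain ⟨m', f', hf1', hf2', hm', hrep'⟩ := hb
    have hb0 : 0 < b := ha0.trans hab
    have hef' : e ≤ f' := by
      by_contra h
      push_neg at h
      have hlog : e = Int.log 2 a := by
        rcases max_choice (Int.log 2 a) (emin E) with h' | h'
        · rw [← he] at h'; exact h'
        · rw [← he] at h'; omega
      have hbu : b < (2:ℝ)^(f'+1) := by rw [hrep']; exact rep_lt hm'
      have h7 : (2:ℝ)^(f'+1) ≤ 2^e := zpow_le_zpow_right₀ one_le_two (by omega)
      have h8 : (2:ℝ)^e ≤ a := by
        rw [hlog]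
        exact_mod_cast Int.zpow_log_le_self (b:=2) (by norm_num) ha0
      linarith
    have hbk : b = ((m' * 2 ^ (f' - e).toNat : ℤ) : ℝ) * 2^(e - (M:ℤ)) := by
      rw [hrep']; push_cast
      rw [← zpow_natCast (2:ℝ) (f'-e).toNat, Int.toNat_of_nonneg (by omega),
        mul_assoc, zpow_merge]
      ring_nf
    set k : ℤ := m' * 2 ^ (f' - e).toNat with hk
    have hnk : n < k := by
      have h1 : (n:ℝ) * 2^(e - (M:ℤ)) < (k:ℝ) * 2^(e - (M:ℤ)) := by
        rw [← hrep, ← hbk]; exact hab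
      have : (n:ℝ) < (k:ℝ) := lt_of_mul_lt_mul_right h1 hz.le
      exact_mod_cast this
    have h2 : ((n:ℝ) + 1) * 2^(e - (M:ℤ)) ≤ (k:ℝ) * 2^(e - (M:ℤ)) := by
      have : ((n:ℝ) + 1) ≤ (k:ℝ) := by exact_mod_cast hnk
      exact mul_le_mul_of_nonneg_right this hz.le
    rw [← hbk] at h2
    rw [hrep]
    linarith [h2]
  linarith

lemma rnd_eq {E M : ℕ} {t y : ℝ} (hy : y ∈ Ffin E M)
    (hstrict : ∀ w ∈ Ffin E M, w ≠ y → |y - t| < |w - t|) : rnd E M t = y := by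
  have hR : RoundsTo E M t y := by
    refine ⟨hy, ?_, ?_⟩
    · intro w hw
      rcases eq_or_ne w y with rfl | h
      · exact le_refl _
      · exact (hstrict w hw h).le
    · rintro ⟨w, hw, hne, heq⟩
      exact absurd heq (ne_of_gt (hstrict w hw hne))
  have hex : ∃ y', RoundsTo E M t y' := ⟨y, hR⟩
  rw [rnd, dif_pos hex]
  by_contra hne
  have h2 := hex.choose_spec
  have h3 := hstrict _ h2.1 hne
  have h4 := h2.2.1 y hy
  linarith

/-- exact summation of approximate gaps over the enumeration of
all non-negative finite floats. -/
theorem exact_summation_of_approximate_gaps (E M : ℕ)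
    (hE : 5 ≤ E) (hM : 3 ≤ M) (hME : (M : ℤ) ≤ 2 ^ (E - 1))
    (N : ℕ) (z : ℕ → ℝ)
    (hmono : ∀ i, i < N → z i < z (i + 1))
    (hmem : ∀ i, i ≤ N → z i ∈ Ffin E M ∧ 0 ≤ z i)
    (hsurj : ∀ y ∈ Ffin E M, 0 ≤ y → ∃ i, i ≤ N ∧ z i = y)
    (h0 : z 0 = 0) (hN : z N = Omax E M)
    (j : ℕ) (hj : j ≤ N) (x : ℕ → ℝ)
    (hxmem : ∀ i, 1 ≤ i → i ≤ j → x i ∈ Ffin E M)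
    (hxlb : ∀ i, 1 ≤ i → i ≤ j → (1 / 2) * (z i - z (i - 1)) < x i)
    (hxub : ∀ i, 1 ≤ i → i ≤ j → x i < (3 / 2) * (z i - z (i - 1))) :
    fsum E M x j = z j := by
  have homega_pos : (0:ℝ) < omega E M := by unfold omega; positivity
  have hzmono : ∀ k l : ℕ, k < l → l ≤ N → z k < z l := by
    intro k l hkl hl
    induction l with
    | zero => omega
    | succ n ihn =>
      rcases (by omega : k = n ∨ k < n) with rfl | h
      · exact hmono k (by omega)
      · exact (ihn h (by omega)).trans (hmono n (by omega))
  have hzle : ∀ k l : ℕ, k ≤ l → l ≤ N → z k ≤ z l := by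
    intro k l hkl hl
    rcases eq_or_lt_of_le hkl with rfl | h
    · exact le_refl _
    · exact (hzmono k l h hl).le
  have hnob : ∀ i, i < N → ∀ w ∈ Ffin E M, z i < w → w < z (i+1) → False := by
    intro i hi w hw h1 h2
    have hw0 : (0:ℝ) ≤ w := le_trans (hmem i (by omega)).2 h1.le
    obtain ⟨k, hk, hzk⟩ := hsurj w hw hw0
    rcases lt_trichotomy k (i+1) with h | h | h
    · have : z k ≤ z i := hzle k i (by omega) (by omega)
      rw [hzk] at this; linarith
    · rw [h] at hzk; linarith
    · have : z (i+1) ≤ z k := hzle (i+1) k (by omega) hk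
      rw [hzk] at this; linarith
  have homem : omega E M ∈ Ffin E M := by
    refine ⟨1, emin E, le_refl _, (emin_lt_emax hE).le, ?_, by simp [omega]⟩
    have : (2:ℤ) ≤ 2^(M+1) := by
      calc (2:ℤ) = 2^1 := by norm_num
      _ ≤ 2^(M+1) := pow_le_pow_right₀ one_le_two (by omega)
    rw [abs_one]; omega
  have hz1 : 1 ≤ N → z 1 = omega E M := by
    intro hN1
    obtain ⟨k, hk, hzk⟩ := hsurj _ homem homega_pos.le
    have hk1 : 1 ≤ k := by
      by_contra h
      push_neg at h
      interval_cases k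
      rw [h0] at hzk
      linarith
    have hle : z 1 ≤ omega E M := hzk ▸ hzle 1 k hk1 hk
    have h1pos : 0 < z 1 := by
      have := hzmono 0 1 (by omega) hN1
      rw [h0] at this; exact this
    obtain ⟨m, hm⟩ := mem_int_mul (hmem 1 hN1).1
    have hm1 : (1:ℤ) ≤ m := by
      have hop : (0:ℝ) < 2^(emin E - (M:ℤ)) := by positivity
      have : (0:ℝ) < (m:ℝ) := by nlinarith [hm ▸ h1pos]
      exact_mod_cast this
    have hge : omega E M ≤ z 1 := by
      rw [hm]
      unfold omega
      have hop : (0:ℝ) < 2^(emin E - (M:ℤ)) := by positivity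
      have : (1:ℝ) ≤ (m:ℝ) := by exact_mod_cast hm1
      nlinarith
    linarith
  -- the key step
  have hstep : ∀ i u, 2 ≤ i → i ≤ N →
      (1/2)*(z i - z (i-1)) < u → u < (3/2)*(z i - z (i-1)) →
      rnd E M (z (i-1) + u) = z i := by
    intro i u hi2 hiN hul huu
    have hi1 : i - 1 + 1 = i := by omega
    have hab : z (i-1) < z i := hzmono (i-1) i (by omega) hiN
    have ha0 : 0 < z (i-1) := by
      have := hzmono 0 (i-1) (by omega) (by omega)
      rw [h0] at this; exact this
    have hbt : |z i - (z (i-1) + u)| < (z i - z (i-1))/2 := by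
      rw [abs_lt]; constructor <;> linarith
    apply rnd_eq (hmem i hiN).1
    intro w hw hne
    rcases le_or_gt w (z (i-1)) with hwa | hwa
    · have h2 : (z (i-1) + u) - w ≤ |w - (z (i-1) + u)| := by
        rw [abs_sub_comm]; exact le_abs_self _
      linarith [hbt, h2, hul]
    · have hwb : z i < w := by
        rcases lt_trichotomy w (z i) with h | h | h
        · exfalso
          refine hnob (i-1) (by omega) w hw hwa ?_
          rw [hi1]; exact h
        · exact absurd h hne
        · exact h
      rcases eq_or_lt_of_le hiN with hiN' | hiN'
      · exfalso
        have h1 := mem_le_Omax hw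
        rw [← hN, ← hiN'] at h1
        linarith
      · have hcw : z (i+1) ≤ w := by
          by_contra h
          push_neg at h
          exact hnob i hiN' w hw hwb h
        have hcons1 : ∀ v ∈ Ffin E M, ¬(z (i-1) < v ∧ v < z i) := by
          rintro v hv ⟨p, q⟩
          refine hnob (i-1) (by omega) v hv p ?_
          rw [hi1]; exact q
        have hcons2 : ∀ v ∈ Ffin E M, ¬(z i < v ∧ v < z (i+1)) := by
          rintro v hv ⟨p, q⟩
          exact hnob i hiN' v hv p q
        have hg1 := gap hE (hmem (i-1) (by omega)).1 (hmem i hiN).1 ha0 hab hcons1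
        have hg2 := gap hE (hmem i hiN).1 (hmem (i+1) (by omega)).1 (ha0.trans hab)
          (hzmono i (i+1) (by omega) hiN') hcons2
        have hmonoe : max (Int.log 2 (z (i-1))) (emin E) - (M:ℤ) ≤
            max (Int.log 2 (z i)) (emin E) - (M:ℤ) := by
          have h6 := Int.log_mono_right (b := 2) ha0 hab.le
          have h7 := max_le_max h6 (le_refl (emin E))
          omega
        have hgap : z i - z (i-1) ≤ z (i+1) - z i := by
          have h5 : (2:ℝ)^(max (Int.log 2 (z (i-1))) (emin E) - (M:ℤ)) ≤
              2^(max (Int.log 2 (z i)) (emin E) - (M:ℤ)) :=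
            zpow_le_zpow_right₀ one_le_two hmonoe
          linarith [hg1, hg2, h5]
        have h1 : w - (z (i-1) + u) ≤ |w - (z (i-1) + u)| := le_abs_self _
        linarith [hbt, hgap, hcw, h1, hul, huu]
  -- main induction
  have key : ∀ k, k ≤ j → fsum E M x k = z k := by
    intro k
    induction k using Nat.strong_induction_on with
    | _ k ih =>
      intro hk
      match k with
      | 0 => simpa [fsum] using h0.symm
      | 1 =>
        show x 1 = z 1
        have hN1 : 1 ≤ N := le_trans hk hj
        have hz1' := hz1 hN1
        have hlb := hxlb 1 le_rfl hk
        have hub := hxub 1 le_rfl hk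
        rw [show (1-1 : ℕ) = 0 from rfl, h0, hz1'] at hlb hub
        obtain ⟨m, hm⟩ := mem_int_mul (hxmem 1 le_rfl hk)
        have hop : (0:ℝ) < 2^(emin E - (M:ℤ)) := by positivity
        rw [hm] at hlb hub
        unfold omega at hlb hub
        have h1 : (0:ℤ) < m := by
          have : (0:ℝ) < (m:ℝ) := by nlinarith
          exact_mod_cast this
        have h2 : m < 2 := by
          have : (m:ℝ) < 2 := by nlinarith
          exact_mod_cast this
        have hm1 : m = 1 := by omega
        rw [hm, hm1, hz1']
        simp [omega]
      | (n+2) =>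
        have h1 : fsum E M x (n+2) = fadd E M (fsum E M x (n+1)) (x (n+2)) := rfl
        rw [h1, ih (n+1) (by omega) (by omega)]
        unfold fadd
        have hlb := hxlb (n+2) (by omega) hk
        have hub := hxub (n+2) (by omega) hk
        rw [show (n+2-1 : ℕ) = n+1 from rfl] at hlb hub
        exact hstep (n+2) (x (n+2)) (by omega) (by omega)
          (by rw [show (n+2-1 : ℕ) = n+1 from rfl]; exact hlb)
          (by rw [show (n+2-1 : ℕ) = n+1 from rfl]; exact hub)
  exact key j le_rfl

end FPFmt
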